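/- arXiv:1711.04349 — 3 statements merged into one kernel-verified Lean document; each statement's English description precedes it below -/
import Mathlib

section
/- Let m ≥ 2 and let 𝒯 be the set of all spanning trees of the complete graph on Fin m, i.e., connected simple graphs on Fin m with exactly m − 1 edges. Then for every subset A ⊆ Fin m with |A| = k, m · ∑_{T ∈ 𝒯} #{edges of T with both endpoints in A} = k(k−1) · |𝒯|; equivalently, the average over all spanning trees of the complete graph on m vertices of the number of edges lying within a fixed k-element subset equals k(k−1)/m. -/
open Finset
open scoped Classical

/-!
The symmetric group acts transitively on the edges of the complete graph and preserves the
family of spanning trees, so every edge lies in the same number `c` of spanning trees. Double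
counting pairs (tree, edge) then gives `(k choose 2) * c` for the edges inside `A` and
`(m choose 2) * c = (m - 1) * |𝒯|` for all edges; dividing the two identities gives the average
`k (k - 1) / m`.
-/

lemma Nat.two_mul_choose_two (n : ℕ) : 2 * n.choose 2 = n * (n - 1) := by
  rw [Nat.choose_two_right, Nat.mul_div_cancel' (Nat.even_mul_pred_self n).two_dvd]

lemma Finset.card_sym2_filter_not_isDiag {α : Type*} [DecidableEq α] (s : Finset α) :
    #{e ∈ s.sym2 | ¬e.IsDiag} = (#s).choose 2 := by
  rw [Finset.sym2_eq_image, Sym2.filter_image_mk_not_isDiag, Sym2.card_image_offDiag]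

lemma Sym2.exists_perm_map_eq_of_not_isDiag {α : Type*} {e e' : Sym2 α} (he : ¬e.IsDiag)
    (he' : ¬e'.IsDiag) : ∃ σ : Equiv.Perm α, e.map σ = e' := by
  induction e using Sym2.ind with | _ a b => ?_
  induction e' using Sym2.ind with | _ c d => ?_
  obtain ⟨σ, hσa, hσb⟩ := MulAction.is_two_pretransitive_iff.mp
    (Equiv.Perm.isMultiplyPretransitive α 2) (Sym2.mk_isDiag_iff.not.mp he)
    (Sym2.mk_isDiag_iff.not.mp he')
  exact ⟨σ, by simp [← hσa, ← hσb, Equiv.Perm.smul_def]⟩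

namespace SimpleGraph

variable {V : Type*} {𝒯 : Finset (SimpleGraph V)}

def IsIsoClosed (𝒯 : Finset (SimpleGraph V)) : Prop :=
  ∀ ⦃T T' : SimpleGraph V⦄, T ≃g T' → T ∈ 𝒯 → T' ∈ 𝒯

lemma card_filter_mem_edgeSet_le_map_perm
    (h𝒯 : IsIsoClosed 𝒯) (σ : Equiv.Perm V) (e : Sym2 V) :
    #{T ∈ 𝒯 | e ∈ T.edgeSet} ≤ #{T ∈ 𝒯 | e.map σ ∈ T.edgeSet} := by
  refine card_le_card_of_injOn (·.map σ.toEmbedding) (fun T hT ↦ ?_)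
    (map_injective _).injOn
  obtain ⟨hT, he⟩ := mem_filter.mp hT
  refine mem_filter.mpr ⟨h𝒯 (Iso.map σ T) hT, ?_⟩
  rw [edgeSet_map]
  exact Set.mem_image_of_mem _ he

lemma card_filter_mem_edgeSet_map_perm
    (h𝒯 : IsIsoClosed 𝒯) (σ : Equiv.Perm V) (e : Sym2 V) :
    #{T ∈ 𝒯 | e.map σ ∈ T.edgeSet} = #{T ∈ 𝒯 | e ∈ T.edgeSet} := by
  refine le_antisymm ?_ (card_filter_mem_edgeSet_le_map_perm h𝒯 σ e)
  simpa [Sym2.map_map] using card_filter_mem_edgeSet_le_map_perm h𝒯 σ⁻¹ (e.map σ)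

lemma card_filter_mem_edgeSet_eq_of_not_isDiag
    (h𝒯 : IsIsoClosed 𝒯) {e e' : Sym2 V} (he : ¬e.IsDiag) (he' : ¬e'.IsDiag) :
    #{T ∈ 𝒯 | e ∈ T.edgeSet} = #{T ∈ 𝒯 | e' ∈ T.edgeSet} := by
  obtain ⟨σ, rfl⟩ := Sym2.exists_perm_map_eq_of_not_isDiag he' he
  exact card_filter_mem_edgeSet_map_perm h𝒯 σ e'

variable [Fintype V] [DecidableEq V]

lemma sum_card_edges_within_eq_sum_card_filter_mem_edgeSet
    (𝒯 : Finset (SimpleGraph V)) (s : Finset V)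
    [DecidablePred fun e : Sym2 V ↦ ∀ x ∈ e, x ∈ s] :
    ∑ T ∈ 𝒯, #{e ∈ T.edgeFinset | ∀ x ∈ e, x ∈ s}
      = ∑ e ∈ s.sym2 with ¬e.IsDiag, #{T ∈ 𝒯 | e ∈ T.edgeSet} := by
  have hwithin : ∀ T : SimpleGraph V, {e ∈ T.edgeFinset | ∀ x ∈ e, x ∈ s}
      = {e ∈ {e ∈ s.sym2 | ¬e.IsDiag} | e ∈ T.edgeSet} := by
    intro T
    ext e
    simp only [mem_filter, mem_edgeFinset, mem_sym2_iff]
    exact ⟨fun ⟨he, hs⟩ ↦ ⟨⟨hs, T.not_isDiag_of_mem_edgeSet he⟩, he⟩,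
      fun ⟨⟨hs, _⟩, he⟩ ↦ ⟨he, hs⟩⟩
  simp only [hwithin, card_filter]
  exact sum_comm

lemma sum_card_edges_within_eq_choose_two_mul
    (h𝒯 : IsIsoClosed 𝒯) {e₀ : Sym2 V} (he₀ : ¬e₀.IsDiag) (s : Finset V)
    [DecidablePred fun e : Sym2 V ↦ ∀ x ∈ e, x ∈ s] :
    ∑ T ∈ 𝒯, #{e ∈ T.edgeFinset | ∀ x ∈ e, x ∈ s}
      = (#s).choose 2 * #{T ∈ 𝒯 | e₀ ∈ T.edgeSet} := by
  rw [sum_card_edges_within_eq_sum_card_filter_mem_edgeSet, sum_congr rfl fun e he ↦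
    card_filter_mem_edgeSet_eq_of_not_isDiag h𝒯 (mem_filter.mp he).2 he₀, sum_const,
    smul_eq_mul, card_sym2_filter_not_isDiag]

theorem choose_two_mul_sum_card_edges_within
    (h𝒯 : IsIsoClosed 𝒯) (s : Finset V)
    [DecidablePred fun e : Sym2 V ↦ ∀ x ∈ e, x ∈ s] :
    (Fintype.card V).choose 2 * ∑ T ∈ 𝒯, #{e ∈ T.edgeFinset | ∀ x ∈ e, x ∈ s}
      = (#s).choose 2 * ∑ T ∈ 𝒯, #T.edgeFinset := by
  rcases lt_or_ge (Fintype.card V) 2 with hV | hV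
  · have hs : #s < 2 := (card_le_univ s).trans_lt hV
    simp [Nat.choose_eq_zero_of_lt hV, Nat.choose_eq_zero_of_lt hs]
  obtain ⟨a, b, hab⟩ := Fintype.exists_pair_of_one_lt_card hV
  have hall : ∀ T : SimpleGraph V, {e ∈ T.edgeFinset | ∀ x ∈ e, x ∈ (univ : Finset V)}
      = T.edgeFinset := fun T ↦ filter_true_of_mem fun _ _ _ _ ↦ mem_univ _
  have htotal := sum_card_edges_within_eq_choose_two_mul h𝒯 (Sym2.mk_isDiag_iff.not.mpr hab) univ
  simp only [hall, card_univ] at htotal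
  rw [sum_card_edges_within_eq_choose_two_mul h𝒯 (Sym2.mk_isDiag_iff.not.mpr hab) s, htotal]
  ring

end SimpleGraph

open SimpleGraph in
/-- Averaging over all spanning trees of the complete graph on
`m` vertices, the number of edges lying inside a fixed `k`-element vertex subset
averages to `k(k−1)/m`: in cross-multiplied form,
`m * ∑_{T ∈ 𝒯} #{edges of T inside A} = k(k−1) * |𝒯|`. -/
theorem spanning_tree_average_inner_edges
    (m : ℕ) (hm : 2 ≤ m)
    -- the set of all spanning trees of the complete graph on `Fin m`:
    -- connected simple graphs with exactly `m - 1` edges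
    (𝒯 : Finset (SimpleGraph (Fin m)))
    (h𝒯 : ∀ T : SimpleGraph (Fin m),
      T ∈ 𝒯 ↔ T.Connected ∧ T.edgeFinset.card = m - 1)
    (A : Finset (Fin m)) (k : ℕ) (hA : A.card = k) :
    m * ∑ T ∈ 𝒯, (T.edgeFinset.filter (fun e => ∀ x ∈ e, x ∈ A)).card
      = k * (k - 1) * 𝒯.card := by
  have h𝒯_iso : IsIsoClosed 𝒯 := by
    intro T T' e hT
    obtain ⟨hconn, hcard⟩ := (h𝒯 T).mp hT
    exact (h𝒯 T').mpr ⟨e.connected_iff.mp hconn, e.card_edgeFinset_eq ▸ hcard⟩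
  have htotal : ∑ T ∈ 𝒯, #T.edgeFinset = (m - 1) * #𝒯 := by
    rw [sum_congr rfl fun T hT ↦ ((h𝒯 T).mp hT).2, sum_const, smul_eq_mul, mul_comm]
  have key := choose_two_mul_sum_card_edges_within h𝒯_iso A
  rw [Fintype.card_fin, hA, htotal] at key
  refine Nat.eq_of_mul_eq_mul_left (show 0 < m - 1 by omega) ?_
  calc (m - 1) * (m * ∑ T ∈ 𝒯, #{e ∈ T.edgeFinset | ∀ x ∈ e, x ∈ A})
      = 2 * m.choose 2 * ∑ T ∈ 𝒯, #{e ∈ T.edgeFinset | ∀ x ∈ e, x ∈ A} := by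
        rw [Nat.two_mul_choose_two]; ring
    _ = 2 * (k.choose 2 * ((m - 1) * #𝒯)) := by rw [Nat.mul_assoc, key]
    _ = (m - 1) * (k * (k - 1) * #𝒯) := by rw [← Nat.two_mul_choose_two]; ring
end

section
/- Assume N ≥ 2. Under the permutation null distribution, E(R_{1,(a)}) = (N − K + |C₀|) · p₁ and E(R_{2,(a)}) = (N − K + |C₀|) · q₁. -/
/-!
Every term of the averaging statistic counts ordered pairs of distinct observations lying in the
sample `S`: `n_{1u}(n_{1u} - 1)` counts such pairs inside the fiber of `u`, and `n_{1u} n_{1w}` the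
pairs across the fibers of an edge `{u, w}`. A fixed pair of distinct observations lies in a
uniformly random `n₁`-subset with probability `p₁ = n₁(n₁ - 1)/(N(N - 1))`, so the weighted terms
have means `(m(u) - 1) p₁` and `p₁`, which sum to `(N - K + |C₀|) p₁`. The second sample is the
complement of the first, a uniformly random `n₂`-subset, which gives `q₁`.
-/

open Finset
open scoped Classical

noncomputable def pairInclusionProb (n k : ℕ) : ℝ :=
  k * (k - 1) / (n * (n - 1))

section UniformSubsets

variable {α : Type*} [DecidableEq α]

theorem card_inter_mul_card_inter_sub_one (S A : Finset α) :
    (#(S ∩ A) : ℝ) * (#(S ∩ A) - 1) = #{p ∈ A.offDiag | p.1 ∈ S ∧ p.2 ∈ S} := by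
  have hoffDiag : {p ∈ A.offDiag | p.1 ∈ S ∧ p.2 ∈ S} = (S ∩ A).offDiag := by
    ext p
    simp only [mem_filter, mem_offDiag, mem_inter]
    tauto
  rw [hoffDiag, offDiag_card, Nat.cast_sub (Nat.le_mul_self _)]
  push_cast
  ring

theorem card_inter_mul_card_inter (S A B : Finset α) :
    (#(S ∩ A) : ℝ) * #(S ∩ B) = #{p ∈ A ×ˢ B | p.1 ∈ S ∧ p.2 ∈ S} := by
  have hprod : {p ∈ A ×ˢ B | p.1 ∈ S ∧ p.2 ∈ S} = (S ∩ A) ×ˢ (S ∩ B) := by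
    ext p
    simp only [mem_filter, mem_product, mem_inter]
    tauto
  rw [hprod, card_product]
  push_cast
  ring

variable [Fintype α]

theorem card_filter_add_card_filter_compl (S : Finset α) (p : α → Prop) [DecidablePred p] :
    #{i ∈ S | p i} + #{i ∈ Sᶜ | p i} = #{i | p i} := by
  rw [← card_union_of_disjoint (disjoint_filter_filter disjoint_compl_right), ← filter_union,
    union_compl]

theorem card_filter_powersetCard_pair_mem {i j : α} (hij : i ≠ j) (k : ℕ) :
    (#{S ∈ powersetCard k univ | i ∈ S ∧ j ∈ S} : ℝ) =
      (Fintype.card α).choose k * pairInclusionProb (Fintype.card α) k := by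
  have hpair : #({i, j} : Finset α) = 2 := card_pair hij
  have hfilter : {S ∈ powersetCard k (univ : Finset α) | i ∈ S ∧ j ∈ S} =
      {S ∈ powersetCard k (univ : Finset α) | ({i, j} : Finset α) ⊆ S} := by
    simp only [insert_subset_iff, singleton_subset_iff]
  rw [hfilter]
  rcases lt_or_ge k 2 with hk | hk
  · have hempty : {S ∈ powersetCard k (univ : Finset α) | ({i, j} : Finset α) ⊆ S} = ∅ :=
      filter_eq_empty_iff.2 fun S hS hsub => by
        have := card_le_card hsub
        rw [mem_powersetCard_univ] at hS
        omega
    interval_cases k <;> simp [hempty, pairInclusionProb]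
  · have hn : (2 : ℝ) ≤ Fintype.card α := by exact_mod_cast hpair ▸ card_le_univ {i, j}
    have hchoose : ((Fintype.card α).choose k : ℝ) * k.choose 2 =
        (Fintype.card α).choose 2 * (Fintype.card α - 2).choose (k - 2) := by
      exact_mod_cast Nat.choose_mul hk
    rw [card_filter_powersetCard_subset _ _ _ (subset_univ _) (hpair ▸ hk), hpair, card_univ]
    rw [Nat.cast_choose_two, Nat.cast_choose_two] at hchoose
    have hn0 : (Fintype.card α : ℝ) * (Fintype.card α - 1) ≠ 0 := by
      apply mul_ne_zero <;> linarith
    rw [pairInclusionProb, eq_comm, mul_div_assoc', div_eq_iff hn0]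
    linarith

theorem sum_card_filter_pair_mem {P : Finset (α × α)} (hP : ∀ p ∈ P, p.1 ≠ p.2) (k : ℕ) :
    ∑ S ∈ powersetCard k univ, (#{p ∈ P | p.1 ∈ S ∧ p.2 ∈ S} : ℝ) =
      #P * ((Fintype.card α).choose k * pairInclusionProb (Fintype.card α) k) := by
  simp_rw [natCast_card_filter]
  rw [sum_comm, ← nsmul_eq_mul, ← sum_const]
  refine sum_congr rfl fun p hp => ?_
  rw [← natCast_card_filter]
  exact card_filter_powersetCard_pair_mem (hP p hp) k

theorem sum_card_inter_mul_card_inter_sub_one (A : Finset α) (k : ℕ) :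
    ∑ S ∈ powersetCard k univ, (#(S ∩ A) : ℝ) * (#(S ∩ A) - 1) =
      #A * (#A - 1) * ((Fintype.card α).choose k * pairInclusionProb (Fintype.card α) k) := by
  simp_rw [card_inter_mul_card_inter_sub_one]
  rw [sum_card_filter_pair_mem (fun p hp => (mem_offDiag.1 hp).2.2), offDiag_card,
    Nat.cast_sub (Nat.le_mul_self _)]
  push_cast
  ring

theorem sum_card_inter_mul_card_inter {A B : Finset α} (hAB : Disjoint A B) (k : ℕ) :
    ∑ S ∈ powersetCard k univ, (#(S ∩ A) : ℝ) * #(S ∩ B) =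
      #A * #B * ((Fintype.card α).choose k * pairInclusionProb (Fintype.card α) k) := by
  simp_rw [card_inter_mul_card_inter]
  rw [sum_card_filter_pair_mem fun p hp => ?_, card_product]
  · push_cast
    ring
  · rw [mem_product] at hp
    exact disjoint_left.1 hAB hp.1 ∘ (· ▸ hp.2)

theorem sum_powersetCard_compl {M : Type*} [AddCommMonoid M] (f : Finset α → M) {k : ℕ}
    (hk : k ≤ Fintype.card α) :
    ∑ S ∈ powersetCard k univ, f Sᶜ = ∑ S ∈ powersetCard (Fintype.card α - k) univ, f S := by
  refine sum_nbij' compl compl (fun S hS => ?_) (fun S hS => ?_) (fun S _ => compl_compl S)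
    (fun S _ => compl_compl S) (fun S _ => rfl)
  · rw [mem_powersetCard_univ] at hS ⊢
    rw [card_compl, hS]
  · rw [mem_powersetCard_univ] at hS ⊢
    rw [card_compl, hS]
    omega

end UniformSubsets

noncomputable def averagingStat {ι : Type*} [Fintype ι] (m : ι → ℕ) (G : SimpleGraph ι)
    [Fintype G.edgeSet] (c : ι → ℝ) : ℝ :=
  ∑ u, c u * (c u - 1) / m u +
    ∑ e ∈ G.edgeFinset, Sym2.lift ⟨fun u w => c u * c w / (m u * m w), fun u w => by ring⟩ e

theorem sum_averagingStat_card_filter {α ι : Type*} [Fintype α] [DecidableEq α] [Fintype ι]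
    [DecidableEq ι] (v : α → ι) {m : ι → ℕ} (hv : ∀ u, #{i | v i = u} = m u)
    (hm : ∀ u, 0 < m u) (G : SimpleGraph ι) [Fintype G.edgeSet] (k : ℕ) :
    ∑ S ∈ powersetCard k univ, averagingStat m G (fun u => #{i ∈ S | v i = u}) =
      (Fintype.card α - Fintype.card ι + #G.edgeFinset) *
        ((Fintype.card α).choose k * pairInclusionProb (Fintype.card α) k) := by
  set P : ℝ := (Fintype.card α).choose k * pairInclusionProb (Fintype.card α) k
  set F : ι → Finset α := fun u => {i | v i = u} with hF
  have hfiber (S : Finset α) (u : ι) : {i ∈ S | v i = u} = S ∩ F u := by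
    rw [hF, inter_filter, inter_univ]
  have hm0 (u : ι) : (m u : ℝ) ≠ 0 := Nat.cast_ne_zero.2 (hm u).ne'
  have hcard : (Fintype.card α : ℝ) = ∑ u, (m u : ℝ) := by
    rw [← card_univ, card_eq_sum_card_fiberwise fun i _ => mem_univ (v i)]
    exact_mod_cast sum_congr rfl fun u _ => hv u
  have hvertex (u : ι) : ∑ S ∈ powersetCard k univ,
      (#{i ∈ S | v i = u} : ℝ) * (#{i ∈ S | v i = u} - 1) / m u = (m u - 1) * P := by
    rw [← sum_div]
    simp_rw [hfiber]
    rw [sum_card_inter_mul_card_inter_sub_one, hv, mul_assoc, mul_div_cancel_left₀ _ (hm0 u)]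
  have hedge : ∀ e ∈ G.edgeFinset, ∑ S ∈ powersetCard k univ,
      Sym2.lift ⟨fun u w => (#{i ∈ S | v i = u} : ℝ) * #{i ∈ S | v i = w} / (m u * m w),
        fun u w => by ring⟩ e = P := by
    intro e he
    induction e using Sym2.ind with
    | _ u w =>
      have huw : u ≠ w := (SimpleGraph.mem_edgeFinset.1 he).ne
      have hdisj : Disjoint (F u) (F w) :=
        disjoint_filter.2 fun i _ hu hw => huw (hu.symm.trans hw)
      simp only [Sym2.lift_mk]
      rw [← sum_div]
      simp_rw [hfiber]
      rw [sum_card_inter_mul_card_inter hdisj, hv, hv,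
        mul_div_cancel_left₀ _ (mul_ne_zero (hm0 u) (hm0 w))]
  unfold averagingStat
  rw [sum_add_distrib, sum_comm, sum_congr rfl fun u _ => hvertex u, sum_comm,
    sum_congr rfl hedge, ← sum_mul, sum_sub_distrib, ← hcard, sum_const, sum_const, card_univ]
  simp only [nsmul_eq_mul, mul_one]
  ring

/-- Expectations of the averaging within-sample edge-counts:
`E R_{1,(a)} = (N − K + |C₀|) p₁` and `E R_{2,(a)} = (N − K + |C₀|) q₁`
under the permutation null distribution. -/
theorem expectation_R1a_R2a
    -- number of distinct values and multiplicities
    (K : ℕ) (m : Fin K → ℕ) (hm : ∀ u, 1 ≤ m u)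
    -- total sample size
    (N : ℕ)
    -- value map with prescribed fiber sizes
    (v : Fin N → Fin K)
    (hv : ∀ u, (Finset.univ.filter (fun i => v i = u)).card = m u)
    -- similarity graph on the distinct values
    (C₀ : SimpleGraph (Fin K))
    -- size of sample 1 and sample 2
    (n₁ n₂ : ℕ) (hn₁' : n₁ ≤ N - 1) (hn₂ : n₂ = N - n₁)
    -- expectation under the permutation null distribution (uniform over
    -- all `n₁`-element subsets of `Fin N`)
    (E : (Finset (Fin N) → ℝ) → ℝ)
    (hE : ∀ f, E f =
      (∑ S ∈ Finset.powersetCard n₁ (Finset.univ : Finset (Fin N)), f S) / (N.choose n₁ : ℝ))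
    -- within-group counts
    (n1 : Fin K → Finset (Fin N) → ℝ)
    (hn1 : ∀ u S, n1 u S = ((S.filter (fun i => v i = u)).card : ℝ))
    (n2 : Fin K → Finset (Fin N) → ℝ)
    (hn2 : ∀ u S, n2 u S = (m u : ℝ) - n1 u S)
    -- the averaging statistics
    (R1a : Finset (Fin N) → ℝ)
    (hR1a : ∀ S, R1a S = ∑ u, n1 u S * (n1 u S - 1) / (m u : ℝ)
        + ∑ e ∈ C₀.edgeFinset,
            Sym2.lift ⟨fun u w => n1 u S * n1 w S / ((m u : ℝ) * (m w : ℝ)),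
              fun u w => by ring⟩ e)
    (R2a : Finset (Fin N) → ℝ)
    (hR2a : ∀ S, R2a S = ∑ u, n2 u S * (n2 u S - 1) / (m u : ℝ)
        + ∑ e ∈ C₀.edgeFinset,
            Sym2.lift ⟨fun u w => n2 u S * n2 w S / ((m u : ℝ) * (m w : ℝ)),
              fun u w => by ring⟩ e)
    -- the constants p₁ and q₁
    (p₁ q₁ : ℝ)
    (hp₁ : p₁ = (n₁ : ℝ) * ((n₁ : ℝ) - 1) / ((N : ℝ) * ((N : ℝ) - 1)))
    (hq₁ : q₁ = (n₂ : ℝ) * ((n₂ : ℝ) - 1) / ((N : ℝ) * ((N : ℝ) - 1))) :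
    E R1a = ((N : ℝ) - (K : ℝ) + (C₀.edgeFinset.card : ℝ)) * p₁ ∧
    E R2a = ((N : ℝ) - (K : ℝ) + (C₀.edgeFinset.card : ℝ)) * q₁ := by
  have hR1 (S : Finset (Fin N)) : R1a S = averagingStat m C₀ (fun u => #{i ∈ S | v i = u}) := by
    simp only [hR1a, hn1, averagingStat]
  have hR2 (S : Finset (Fin N)) : R2a S = averagingStat m C₀ (fun u => #{i ∈ Sᶜ | v i = u}) := by
    have hcompl (u : Fin K) : n2 u S = #{i ∈ Sᶜ | v i = u} := by
      rw [hn2, hn1, ← hv u, ← card_filter_add_card_filter_compl S]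
      push_cast
      ring
    simp only [hR2a, hcompl, averagingStat]
  have hn₁N : n₁ ≤ N := by omega
  have hchoose : (N.choose n₁ : ℝ) ≠ 0 := Nat.cast_ne_zero.2 (Nat.choose_pos hn₁N).ne'
  have hsum := sum_averagingStat_card_filter v hv hm C₀
  simp only [Fintype.card_fin] at hsum
  constructor
  · rw [hE, sum_congr rfl fun S _ => hR1 S, hsum, mul_left_comm,
      mul_div_cancel_left₀ _ hchoose, hp₁, pairInclusionProb]
  · rw [hE, sum_congr rfl fun S _ => hR2 S, sum_powersetCard_compl
      (fun S => averagingStat m C₀ fun u => #{i ∈ S | v i = u}) (by simpa using hn₁N),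
      Fintype.card_fin, hsum, Nat.choose_symm hn₁N, ← hn₂, mul_left_comm,
      mul_div_cancel_left₀ _ hchoose, hq₁, pairInclusionProb]
end

section
/- Assume N ≥ 4. Under the permutation null distribution, Var(R_{1,(a)}) = 4(p₂ − p₃)( N − K + 2|C₀| + ∑_u deg_{C₀}(u)²/(4m(u)) − ∑_u deg_{C₀}(u)/m(u) ) + (p₃ − p₁²)(N − K + |C₀|)² + (p₁ − 2p₂ + p₃) ∑_{{u,w} edge of C₀} 1/(m(u)m(w)) + 2(p₁ − 4p₂ + 3p₃)(K − ∑_u 1/m(u)); and Var(R_{2,(a)}) is given by the same formula with q₁, q₂, q₃ in place of p₁, p₂, p₃. -/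
/-!
Write `x_i = 1[i ∈ S]`. With the pair weights `a i j = 1 / m(u)` for distinct observations of the
same value `u` and `a i j = 1 / (2 m(u) m(w))` for observations of adjacent values `u ~ w`,
`R_{1,(a)}(S) = ∑_{i,j} a i j x_i x_j` is a quadratic form in the sample indicators, and
`R_{2,(a)}(S) = R_{1,(a)}(Sᶜ)` is the same form for the complementary sample of size `n₂`. Under
uniform sampling of `n` out of `N` the probability that `t` given observations are all sampled is
`n(n-1)⋯(n-t+1) / (N(N-1)⋯(N-t+1))`, so the second moment is a sum of `a i j * a k l` weighted
according to how many of `i, j, k, l` coincide. This gives the variance of any symmetric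
zero-diagonal form in terms of its total mass, its squared row sums and its squared entries. For
the weights above the total mass is `N - K + |C₀|`, the row sum at an observation of value `u` is
`1 - 1/m(u) + deg(u)/(2 m(u))`, and the squared entries add up to `K - ∑ 1/m(u)` plus half the
edge sum of `1/(m(u) m(w))`.
-/

open Finset
open scoped BigOperators

lemma expect_sub_expect_sq {α : Type*} (s : Finset α) (f : α → ℝ) :
    𝔼 x ∈ s, (f x - 𝔼 y ∈ s, f y) ^ 2 = 𝔼 x ∈ s, f x ^ 2 - (𝔼 x ∈ s, f x) ^ 2 := by
  rcases s.eq_empty_or_nonempty with rfl | hs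
  · simp
  simp only [sub_sq, expect_add_distrib, expect_sub_distrib, ← expect_mul, ← mul_expect,
    expect_const hs]
  ring

section PairSum

variable {ι : Type*}

noncomputable def pairSum (a : ι → ι → ℝ) (S : Finset ι) : ℝ := ∑ i ∈ S, ∑ j ∈ S, a i j

/-- With `i ≠ j` and `k ≠ l`, `#{i, j, k, l} = 4 - s` where `s ≤ 2` counts the coincidences between
`{i, j}` and `{k, l}`; the right side is the interpolation of `r` at `4, 3, 2` in `s`. -/
lemma apply_card_quadruple_eq [DecidableEq ι] (r : ℕ → ℝ) {i j k l : ι} (hij : i ≠ j)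
    (hkl : k ≠ l) :
    r #{i, j, k, l} = r 4
      + (r 3 - r 4) * ((if i = k then 1 else 0) + (if i = l then 1 else 0)
          + (if j = k then 1 else 0) + (if j = l then 1 else 0))
      + (r 2 - 2 * r 3 + r 4) * ((if i = k then 1 else 0) * (if j = l then 1 else 0)
          + (if i = l then 1 else 0) * (if j = k then 1 else 0)) := by
  by_cases hik : i = k <;> by_cases hil : i = l <;> by_cases hjk : j = k <;>
    by_cases hjl : j = l <;> subst_vars <;>
    simp_all [card_insert_of_notMem, eq_comm] <;> ring

variable [Fintype ι] {a : ι → ι → ℝ}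

lemma sum_mul_mul_swap_left (hsymm : ∀ i j, a i j = a j i) (F : ι → ι → ι → ι → ℝ) :
    ∑ i, ∑ j, ∑ k, ∑ l, a i j * a k l * F j i k l
      = ∑ i, ∑ j, ∑ k, ∑ l, a i j * a k l * F i j k l := by
  rw [sum_comm]
  exact sum_congr rfl fun i _ => sum_congr rfl fun j _ => sum_congr rfl fun k _ =>
    sum_congr rfl fun l _ => by rw [hsymm j i]

lemma sum_mul_mul_swap_right (hsymm : ∀ i j, a i j = a j i) (F : ι → ι → ι → ι → ℝ) :
    ∑ i, ∑ j, ∑ k, ∑ l, a i j * a k l * F i j l k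
      = ∑ i, ∑ j, ∑ k, ∑ l, a i j * a k l * F i j k l := by
  refine sum_congr rfl fun i _ => sum_congr rfl fun j _ => ?_
  rw [sum_comm]
  exact sum_congr rfl fun k _ => sum_congr rfl fun l _ => by rw [hsymm l k]

variable [DecidableEq ι]

lemma sum_card_quadruple_mul (hsymm : ∀ i j, a i j = a j i) (hdiag : ∀ i, a i i = 0)
    (r : ℕ → ℝ) :
    ∑ i, ∑ j, ∑ k, ∑ l, r #{i, j, k, l} * (a i j * a k l)
      = r 4 * (∑ i, ∑ j, a i j) ^ 2 + 4 * (r 3 - r 4) * ∑ i, (∑ j, a i j) ^ 2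
        + 2 * (r 2 - 2 * r 3 + r 4) * ∑ i, ∑ j, a i j ^ 2 := by
  have hpoint : ∀ i j k l, r #{i, j, k, l} * (a i j * a k l) = r 4 * (a i j * a k l)
      + (r 3 - r 4) * (a i j * a k l * (if i = k then 1 else 0)
        + a i j * a k l * (if i = l then 1 else 0)
        + a i j * a k l * (if j = k then 1 else 0) + a i j * a k l * (if j = l then 1 else 0))
      + (r 2 - 2 * r 3 + r 4)
        * (a i j * a k l * ((if i = k then 1 else 0) * (if j = l then 1 else 0))
          + a i j * a k l * ((if i = l then 1 else 0) * (if j = k then 1 else 0))) := by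
    intro i j k l
    rcases eq_or_ne i j with rfl | hij
    · simp [hdiag]
    rcases eq_or_ne k l with rfl | hkl
    · simp [hdiag]
    rw [apply_card_quadruple_eq r hij hkl]
    ring
  -- by symmetry of `a`, every coincidence pattern reduces to `i = k` or to `i = k, j = l`
  have hil := sum_mul_mul_swap_right hsymm fun i _ k _ => if i = k then (1 : ℝ) else 0
  have hjk := sum_mul_mul_swap_left hsymm fun i _ k _ => if i = k then (1 : ℝ) else 0
  have hjl := sum_mul_mul_swap_left hsymm fun i _ _ l => if i = l then (1 : ℝ) else 0
  have hiljk := sum_mul_mul_swap_right hsymm fun i j k l =>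
    (if i = k then (1 : ℝ) else 0) * (if j = l then 1 else 0)
  have hik : ∑ i, ∑ j, ∑ k, ∑ l, a i j * a k l * (if i = k then 1 else 0)
      = ∑ i, (∑ j, a i j) ^ 2 := by
    simp [mul_ite, sq, sum_mul_sum]
  have hikjl : ∑ i, ∑ j, ∑ k, ∑ l,
      a i j * a k l * ((if i = k then 1 else 0) * (if j = l then 1 else 0))
      = ∑ i, ∑ j, a i j ^ 2 := by
    simp [mul_ite, sq]
  rw [sum_congr rfl fun i _ => sum_congr rfl fun j _ => sum_congr rfl fun k _ =>
    sum_congr rfl fun l _ => hpoint i j k l]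
  simp only [sum_add_distrib, ← mul_sum]
  rw [hjl, hil, hjk, hiljk, hik, hikjl]
  simp only [← sum_mul]
  ring

lemma sum_sum_mem_comm {β : Type*} [AddCommMonoid β] (𝒮 : Finset (Finset ι))
    (f : Finset ι → ι → β) :
    ∑ S ∈ 𝒮, ∑ i ∈ S, f S i = ∑ i, ∑ S ∈ 𝒮 with i ∈ S, f S i :=
  sum_comm' (by simp)

lemma sum_pairSum (𝒮 : Finset (Finset ι)) (a : ι → ι → ℝ) :
    ∑ S ∈ 𝒮, pairSum a S = ∑ i, ∑ j, (#{S ∈ 𝒮 | {i, j} ⊆ S} : ℝ) * a i j := by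
  simp only [pairSum, sum_sum_mem_comm, sum_const, filter_filter, nsmul_eq_mul,
    insert_subset_iff, singleton_subset_iff]

lemma sum_pairSum_sq (𝒮 : Finset (Finset ι)) (a : ι → ι → ℝ) :
    ∑ S ∈ 𝒮, pairSum a S ^ 2
      = ∑ i, ∑ j, ∑ k, ∑ l, (#{S ∈ 𝒮 | {i, j, k, l} ⊆ S} : ℝ) * (a i j * a k l) := by
  simp only [pairSum, sq, sum_mul_sum, sum_sum_mem_comm, sum_const, filter_filter, nsmul_eq_mul,
    insert_subset_iff, singleton_subset_iff, and_assoc]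
  refine sum_congr rfl fun i _ => ?_
  rw [sum_comm]
  simp only [and_left_comm]

theorem expect_sub_expect_pairSum_sq (𝒮 : Finset (Finset ι)) (h𝒮 : 𝒮.Nonempty) (r : ℕ → ℝ)
    (hr : ∀ T : Finset ι, #T ≤ 4 → (#{S ∈ 𝒮 | T ⊆ S} : ℝ) = #𝒮 * r #T)
    (hsymm : ∀ i j, a i j = a j i) (hdiag : ∀ i, a i i = 0) :
    𝔼 S ∈ 𝒮, (pairSum a S - 𝔼 S' ∈ 𝒮, pairSum a S') ^ 2
      = 4 * (r 3 - r 4) * ∑ i, (∑ j, a i j) ^ 2 + (r 4 - r 2 ^ 2) * (∑ i, ∑ j, a i j) ^ 2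
        + 2 * (r 2 - 2 * r 3 + r 4) * ∑ i, ∑ j, a i j ^ 2 := by
  have hc : (#𝒮 : ℝ) ≠ 0 := by exact_mod_cast h𝒮.card_ne_zero
  have hpair : ∀ i j, (#{S ∈ 𝒮 | {i, j} ⊆ S} : ℝ) * a i j = #𝒮 * (r 2 * a i j) := by
    intro i j
    rcases eq_or_ne i j with rfl | hij
    · simp [hdiag]
    rw [hr _ (card_le_two.trans (by norm_num)), card_pair hij, mul_assoc]
  have hmean : ∑ S ∈ 𝒮, pairSum a S = #𝒮 * (r 2 * ∑ i, ∑ j, a i j) := by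
    simp only [sum_pairSum, hpair, ← mul_sum]
  have hsq : ∑ S ∈ 𝒮, pairSum a S ^ 2
      = #𝒮 * ∑ i, ∑ j, ∑ k, ∑ l, r #{i, j, k, l} * (a i j * a k l) := by
    simp only [sum_pairSum_sq, hr _ card_le_four, mul_sum, mul_assoc]
  rw [expect_sub_expect_sq, expect_eq_sum_div_card, expect_eq_sum_div_card, hsq, hmean,
    sum_card_quadruple_mul hsymm hdiag]
  field_simp
  ring

end PairSum

noncomputable def inclusionProb (N n t : ℕ) : ℝ := n.descFactorial t / N.descFactorial t

lemma inclusionProb_two (N n : ℕ) :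
    inclusionProb N n 2 = n * (n - 1) / (N * (N - 1)) := by
  rw [inclusionProb, ← descPochhammer_eval_eq_descFactorial ℝ,
    ← descPochhammer_eval_eq_descFactorial ℝ]
  simp [descPochhammer_succ_eval]

lemma inclusionProb_three (N n : ℕ) :
    inclusionProb N n 3 = n * (n - 1) * (n - 2) / (N * (N - 1) * (N - 2)) := by
  rw [inclusionProb, ← descPochhammer_eval_eq_descFactorial ℝ,
    ← descPochhammer_eval_eq_descFactorial ℝ]
  simp [descPochhammer_succ_eval]

lemma inclusionProb_four (N n : ℕ) :
    inclusionProb N n 4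
      = n * (n - 1) * (n - 2) * (n - 3) / (N * (N - 1) * (N - 2) * (N - 3)) := by
  rw [inclusionProb, ← descPochhammer_eval_eq_descFactorial ℝ,
    ← descPochhammer_eval_eq_descFactorial ℝ]
  simp [descPochhammer_succ_eval]

lemma Nat.choose_sub_mul_descFactorial {N n t : ℕ} (ht : t ≤ n) :
    (N - t).choose (n - t) * N.descFactorial t = N.choose n * n.descFactorial t := by
  rw [Nat.descFactorial_eq_factorial_mul_choose, Nat.descFactorial_eq_factorial_mul_choose,
    mul_left_comm, mul_comm ((N - t).choose (n - t)), ← Nat.choose_mul ht]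
  ring

section UniformSubset

variable {α : Type*} [Fintype α] [DecidableEq α]

lemma card_filter_powersetCard_univ_superset (n : ℕ) (T : Finset α) :
    (#{S ∈ powersetCard n (univ : Finset α) | T ⊆ S} : ℝ)
      = #(powersetCard n (univ : Finset α)) * inclusionProb (Fintype.card α) n #T := by
  have hT : (Fintype.card α).descFactorial #T ≠ 0 :=
    (Nat.descFactorial_pos.mpr (card_le_univ T)).ne'
  rw [card_powersetCard, card_univ, inclusionProb, mul_div_assoc',
    eq_div_iff (by exact_mod_cast hT)]
  norm_cast
  by_cases h : #T ≤ n
  · rw [card_filter_powersetCard_subset T univ n (subset_univ T) h, card_univ]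
    exact Nat.choose_sub_mul_descFactorial h
  · have hempty : {S ∈ powersetCard n (univ : Finset α) | T ⊆ S} = ∅ :=
      filter_eq_empty_iff.mpr fun S hS hTS =>
        h ((card_le_card hTS).trans (mem_powersetCard.mp hS).2.le)
    rw [hempty, Nat.descFactorial_eq_zero_iff_lt.mpr (not_le.mp h)]
    simp

lemma expect_powersetCard_compl {n : ℕ} (hn : n ≤ Fintype.card α) (g : Finset α → ℝ) :
    𝔼 S ∈ powersetCard n univ, g Sᶜ = 𝔼 S ∈ powersetCard (Fintype.card α - n) univ, g S := by
  refine expect_nbij' compl compl (fun S hS => ?_) (fun S hS => ?_) (fun S _ => compl_compl S)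
    (fun S _ => compl_compl S) (fun S _ => rfl)
  · simp_all [card_compl]
  · simp_all [card_compl]
    omega

end UniformSubset

lemma sum_ite_eq_zero_of_mem {ι : Type*} [DecidableEq ι] {s : Finset ι} {i : ι} (hi : i ∈ s)
    (f : ι → ℝ) : ∑ j ∈ s, (if i = j then 0 else f j) = ∑ j ∈ s, f j - f i := by
  have hsplit : ∀ j, (if i = j then 0 else f j) = f j - if i = j then f j else 0 := by
    intro j; split_ifs <;> simp_all
  simp only [hsplit, sum_sub_distrib, sum_ite_eq, if_pos hi]

lemma sum_sum_ite_eq_zero {ι : Type*} [DecidableEq ι] (s : Finset ι) (f : ι → ι → ℝ) :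
    ∑ i ∈ s, ∑ j ∈ s, (if i = j then 0 else f i j)
      = ∑ i ∈ s, ∑ j ∈ s, f i j - ∑ i ∈ s, f i i := by
  rw [← sum_sub_distrib]
  exact sum_congr rfl fun i hi => sum_ite_eq_zero_of_mem hi (f i)

lemma SimpleGraph.sum_sum_neighborFinset_eq_two_nsmul {V M : Type*} [Fintype V] [DecidableEq V]
    [AddCommMonoid M] (G : SimpleGraph V) [DecidableRel G.Adj] (f : V → V → M)
    (hf : ∀ u w, f u w = f w u) :
    ∑ u, ∑ w ∈ G.neighborFinset u, f u w = 2 • ∑ e ∈ G.edgeFinset, Sym2.lift ⟨f, hf⟩ e := by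
  have hfst : ∑ d : G.Dart, f d.fst d.snd = ∑ u, ∑ w ∈ G.neighborFinset u, f u w := by
    rw [← sum_fiberwise univ fun d : G.Dart => d.fst]
    refine sum_congr rfl fun u _ => ?_
    rw [G.dart_fst_fiber u, sum_image fun _ _ _ _ h => G.dartOfNeighborSet_injective u h,
      G.neighborFinset_def, ← sum_set_coe]
    rfl
  have hedge : ∑ d : G.Dart, f d.fst d.snd = ∑ e ∈ G.edgeFinset, 2 • Sym2.lift ⟨f, hf⟩ e := by
    rw [← sum_fiberwise_of_maps_to fun d _ => SimpleGraph.mem_edgeFinset.mpr d.edge_mem]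
    refine sum_congr rfl fun e he => ?_
    rw [sum_congr rfl fun d hd =>
        show f d.fst d.snd = Sym2.lift ⟨f, hf⟩ e from (mem_filter.mp hd).2 ▸ rfl, sum_const,
      G.dart_edge_fiber_card e (SimpleGraph.mem_edgeFinset.mp he)]
  rw [← hfst, hedge, smul_sum]

lemma card_filter_compl {ι κ : Type*} [Fintype ι] [DecidableEq ι] [DecidableEq κ] (v : ι → κ)
    (S : Finset ι) (u : κ) :
    (#{i ∈ Sᶜ | v i = u} : ℝ) = #{i | v i = u} - #{i ∈ S | v i = u} := by
  rw [eq_sub_iff_add_eq, add_comm]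
  norm_cast
  rw [← card_union_of_disjoint (disjoint_filter_filter disjoint_compl_right), ← filter_union,
    union_compl]

section Fibers

variable {ι κ : Type*} [Fintype κ] [DecidableEq κ]

lemma sum_comp_eq_sum_card_filter_mul (s : Finset ι) (v : ι → κ) (g : κ → ℝ) :
    ∑ i ∈ s, g (v i) = ∑ u, (#{i ∈ s | v i = u} : ℝ) * g u := by
  rw [← sum_fiberwise s v]
  refine sum_congr rfl fun u _ => ?_
  rw [sum_congr rfl fun i hi => congrArg g (mem_filter.mp hi).2, sum_const, nsmul_eq_mul]

lemma sum_sum_comp_offDiag [DecidableEq ι] (s : Finset ι) (v : ι → κ) (b : κ → κ → ℝ) :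
    ∑ i ∈ s, ∑ j ∈ s, (if i = j then 0 else b (v i) (v j))
      = ∑ u, ∑ w, (#{i ∈ s | v i = u} : ℝ) * #{i ∈ s | v i = w} * b u w
        - ∑ u, (#{i ∈ s | v i = u} : ℝ) * b u u := by
  rw [sum_sum_ite_eq_zero, sum_comp_eq_sum_card_filter_mul s v fun u => b u u,
    sum_congr rfl fun i _ => sum_comp_eq_sum_card_filter_mul s v (b (v i)),
    sum_comp_eq_sum_card_filter_mul s v fun u => ∑ w, (#{i ∈ s | v i = w} : ℝ) * b u w]
  simp only [mul_sum, mul_assoc]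

variable [Fintype ι] {m : κ → ℕ} {v : ι → κ}

lemma sum_comp_eq_sum_mul_of_card_fiber (hv : ∀ u, #{i | v i = u} = m u) (g : κ → ℝ) :
    ∑ i, g (v i) = ∑ u, (m u : ℝ) * g u := by
  simp only [sum_comp_eq_sum_card_filter_mul univ v g, hv]

lemma sum_cast_eq_card_of_card_fiber (hv : ∀ u, #{i | v i = u} = m u) :
    ∑ u, (m u : ℝ) = Fintype.card ι := by
  simpa using (sum_comp_eq_sum_mul_of_card_fiber hv fun _ => (1 : ℝ)).symm

end Fibers

section ValueGraph

variable {ι κ : Type*} [DecidableEq ι] [Fintype κ] [DecidableEq κ]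
  (m : κ → ℕ) (v : ι → κ) (G : SimpleGraph κ) [DecidableRel G.Adj]

noncomputable def valueWeight (u w : κ) : ℝ :=
  (if u = w then (m u : ℝ)⁻¹ else 0) + (if G.Adj u w then (2 * m u * m w : ℝ)⁻¹ else 0)

noncomputable def pairWeight (i j : ι) : ℝ := if i = j then 0 else valueWeight m G (v i) (v j)

/-- The statistic `R_{1,(a)}` of the paper, evaluated at the sample `S`. -/
noncomputable def avgWithinEdgeCount (S : Finset ι) : ℝ :=
  ∑ u, (#{i ∈ S | v i = u} : ℝ) * (#{i ∈ S | v i = u} - 1) / m u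
    + ∑ e ∈ G.edgeFinset, Sym2.lift ⟨fun u w =>
        (#{i ∈ S | v i = u} : ℝ) * #{i ∈ S | v i = w} / (m u * m w), fun u w => by ring⟩ e

omit [Fintype κ] in
lemma valueWeight_comm (u w : κ) : valueWeight m G u w = valueWeight m G w u := by
  by_cases h : u = w
  · rw [h]
  · simp [valueWeight, h, Ne.symm h, G.adj_comm u, mul_right_comm]

omit [Fintype κ] in
lemma pairWeight_comm (i j : ι) : pairWeight m v G i j = pairWeight m v G j i := by
  by_cases hij : i = j
  · rw [hij]
  · simp [pairWeight, hij, Ne.symm hij, valueWeight_comm]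

omit [Fintype κ] in
lemma pairWeight_self (i : ι) : pairWeight m v G i i = 0 := if_pos rfl

lemma sum_valueWeight_mul (f : κ → ℝ) (u : κ) :
    ∑ w, f w * valueWeight m G u w
      = f u * (m u : ℝ)⁻¹ + ∑ w ∈ G.neighborFinset u, f w * (2 * m u * m w : ℝ)⁻¹ := by
  simp [valueWeight, mul_add, sum_add_distrib, mul_ite, ← sum_filter, G.neighborFinset_eq_filter]

omit [Fintype κ] in
lemma valueWeight_sq (u w : κ) :
    valueWeight m G u w ^ 2 = (if u = w then (m u : ℝ)⁻¹ ^ 2 else 0)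
      + (if G.Adj u w then (2 * m u * m w : ℝ)⁻¹ ^ 2 else 0) := by
  by_cases h : u = w
  · simp [valueWeight, h]
  · by_cases hadj : G.Adj u w <;> simp [valueWeight, h, hadj]

lemma sum_valueWeight_sq_mul (f : κ → ℝ) (u : κ) :
    ∑ w, f w * valueWeight m G u w ^ 2
      = f u * (m u : ℝ)⁻¹ ^ 2 + ∑ w ∈ G.neighborFinset u, f w * (2 * m u * m w : ℝ)⁻¹ ^ 2 := by
  simp [valueWeight_sq, mul_add, sum_add_distrib, mul_ite, ← sum_filter,
    G.neighborFinset_eq_filter]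

lemma avgWithinEdgeCount_eq_pairSum (S : Finset ι) :
    avgWithinEdgeCount m v G S = pairSum (pairWeight m v G) S := by
  set n : κ → ℝ := fun u => #{i ∈ S | v i = u}
  have hedge := G.sum_sum_neighborFinset_eq_two_nsmul (fun u w => n u * n w / (m u * m w))
    fun u w => by ring
  have hrow : ∀ u, ∑ w, n u * n w * valueWeight m G u w - n u * valueWeight m G u u
      = n u * (n u - 1) / m u + (∑ w ∈ G.neighborFinset u, n u * n w / (m u * m w)) / 2 := by
    intro u
    have hhalf : ∀ w, n u * (n w * (2 * m u * m w : ℝ)⁻¹) = n u * n w / (m u * m w) / 2 :=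
      fun w => by ring
    simp only [mul_assoc, ← mul_sum]
    rw [sum_valueWeight_mul, mul_add, mul_sum, sum_congr rfl fun w _ => hhalf w, ← sum_div]
    simp only [valueWeight, if_true, G.irrefl, if_false, add_zero]
    ring
  unfold pairSum pairWeight
  rw [sum_sum_comp_offDiag, ← sum_sub_distrib, sum_congr rfl fun u _ => hrow u,
    sum_add_distrib, ← sum_div, hedge, avgWithinEdgeCount, nsmul_eq_mul]
  ring

variable [Fintype ι] {m v}

lemma sum_pairWeight (hv : ∀ u, #{i | v i = u} = m u) (hm : ∀ u, m u ≠ 0) (i : ι) :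
    ∑ j, pairWeight m v G i j = 1 - (m (v i) : ℝ)⁻¹ + G.degree (v i) / (2 * m (v i)) := by
  have hhalf : ∀ w, (m w : ℝ) * (2 * m (v i) * m w : ℝ)⁻¹ = (2 * m (v i) : ℝ)⁻¹ := fun w => by
    field_simp [hm w]
  unfold pairWeight
  rw [sum_ite_eq_zero_of_mem (mem_univ i),
    sum_comp_eq_sum_mul_of_card_fiber hv (valueWeight m G (v i)),
    sum_valueWeight_mul, sum_congr rfl fun w _ => hhalf w, sum_const,
    G.card_neighborFinset_eq_degree]
  simp only [valueWeight, if_true, G.irrefl, if_false, add_zero, nsmul_eq_mul,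
    mul_inv_cancel₀ (Nat.cast_ne_zero.mpr (hm (v i)) : (m (v i) : ℝ) ≠ 0)]
  ring

lemma sum_sum_pairWeight (hv : ∀ u, #{i | v i = u} = m u) (hm : ∀ u, m u ≠ 0) :
    ∑ i, ∑ j, pairWeight m v G i j = Fintype.card ι - Fintype.card κ + #G.edgeFinset := by
  have hdeg : ∑ u, (G.degree u : ℝ) = 2 * #G.edgeFinset := by
    exact_mod_cast G.sum_degrees_eq_twice_card_edges
  have hrow : ∀ u, (m u : ℝ) * (1 - (m u : ℝ)⁻¹ + G.degree u / (2 * m u))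
      = m u - 1 + G.degree u / 2 := fun u => by
    field_simp [hm u]
  simp only [sum_pairWeight G hv hm]
  rw [sum_comp_eq_sum_mul_of_card_fiber hv fun u => 1 - (m u : ℝ)⁻¹ + G.degree u / (2 * m u),
    sum_congr rfl fun u _ => hrow u, sum_add_distrib, sum_sub_distrib, ← sum_div,
    sum_cast_eq_card_of_card_fiber hv, hdeg, sum_const, card_univ, nsmul_eq_mul]
  ring

lemma sum_sq_sum_pairWeight (hv : ∀ u, #{i | v i = u} = m u) (hm : ∀ u, m u ≠ 0) :
    ∑ i, (∑ j, pairWeight m v G i j) ^ 2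
      = Fintype.card ι - 2 * Fintype.card κ + 2 * #G.edgeFinset
        + ∑ u, (G.degree u : ℝ) ^ 2 / (4 * m u) - ∑ u, (G.degree u : ℝ) / m u
        + ∑ u, (m u : ℝ)⁻¹ := by
  have hdeg : ∑ u, (G.degree u : ℝ) = 2 * #G.edgeFinset := by
    exact_mod_cast G.sum_degrees_eq_twice_card_edges
  have hrow : ∀ u, (m u : ℝ) * (1 - (m u : ℝ)⁻¹ + G.degree u / (2 * m u)) ^ 2
      = m u - 2 + G.degree u + (G.degree u : ℝ) ^ 2 / (4 * m u) - G.degree u / m u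
        + (m u : ℝ)⁻¹ := fun u => by
    field_simp [hm u]
    ring
  simp only [sum_pairWeight G hv hm]
  rw [sum_comp_eq_sum_mul_of_card_fiber hv fun u => (1 - (m u : ℝ)⁻¹ + G.degree u / (2 * m u)) ^ 2,
    sum_congr rfl fun u _ => hrow u]
  simp only [sum_add_distrib, sum_sub_distrib, sum_cast_eq_card_of_card_fiber hv, hdeg, sum_const,
    card_univ, nsmul_eq_mul]
  ring

lemma sum_sum_pairWeight_sq (hv : ∀ u, #{i | v i = u} = m u) (hm : ∀ u, m u ≠ 0) :
    ∑ i, ∑ j, pairWeight m v G i j ^ 2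
      = Fintype.card κ - ∑ u, (m u : ℝ)⁻¹
        + (∑ e ∈ G.edgeFinset,
            Sym2.lift ⟨fun u w => 1 / ((m u : ℝ) * m w), fun u w => by ring⟩ e) / 2 := by
  have hsq : ∀ i j, pairWeight m v G i j ^ 2
      = if i = j then 0 else valueWeight m G (v i) (v j) ^ 2 := fun i j => by
    unfold pairWeight
    split_ifs <;> simp
  have hrow : ∀ u, ∑ w, (m u : ℝ) * m w * valueWeight m G u w ^ 2 - m u * valueWeight m G u u ^ 2
      = 1 - (m u : ℝ)⁻¹ + (∑ w ∈ G.neighborFinset u, 1 / ((m u : ℝ) * m w)) / 4 := fun u => by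
    have hquarter : ∀ w ∈ G.neighborFinset u,
        (m u : ℝ) * (m w * (2 * m u * m w : ℝ)⁻¹ ^ 2) = 1 / ((m u : ℝ) * m w) / 4 :=
      fun w _ => by field_simp [hm u, hm w]; ring
    simp only [mul_assoc, ← mul_sum]
    rw [sum_valueWeight_sq_mul, mul_add, mul_sum, sum_congr rfl hquarter, ← sum_div]
    simp only [valueWeight, if_true, G.irrefl, if_false, add_zero]
    field_simp [hm u]
    ring
  have hedge := G.sum_sum_neighborFinset_eq_two_nsmul (fun u w => 1 / ((m u : ℝ) * m w))
    fun u w => by ring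
  simp only [hsq]
  rw [sum_sum_comp_offDiag univ v fun u w => valueWeight m G u w ^ 2]
  simp only [hv]
  rw [← sum_sub_distrib, sum_congr rfl fun u _ => hrow u, sum_add_distrib, sum_sub_distrib,
    ← sum_div, hedge, sum_const, card_univ, nsmul_eq_mul, nsmul_eq_mul]
  ring

theorem expect_sub_expect_avgWithinEdgeCount_sq (hv : ∀ u, #{i | v i = u} = m u)
    (hm : ∀ u, m u ≠ 0) {n : ℕ} (hn : n ≤ Fintype.card ι) :
    𝔼 S ∈ powersetCard n univ,
        (avgWithinEdgeCount m v G S - 𝔼 S' ∈ powersetCard n univ, avgWithinEdgeCount m v G S') ^ 2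
      = 4 * (inclusionProb (Fintype.card ι) n 3 - inclusionProb (Fintype.card ι) n 4)
          * (Fintype.card ι - Fintype.card κ + 2 * #G.edgeFinset
            + ∑ u, (G.degree u : ℝ) ^ 2 / (4 * m u) - ∑ u, (G.degree u : ℝ) / m u)
        + (inclusionProb (Fintype.card ι) n 4 - inclusionProb (Fintype.card ι) n 2 ^ 2)
          * (Fintype.card ι - Fintype.card κ + #G.edgeFinset) ^ 2
        + (inclusionProb (Fintype.card ι) n 2 - 2 * inclusionProb (Fintype.card ι) n 3
            + inclusionProb (Fintype.card ι) n 4)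
          * ∑ e ∈ G.edgeFinset,
              Sym2.lift ⟨fun u w => 1 / ((m u : ℝ) * m w), fun u w => by ring⟩ e
        + 2 * (inclusionProb (Fintype.card ι) n 2 - 4 * inclusionProb (Fintype.card ι) n 3
            + 3 * inclusionProb (Fintype.card ι) n 4)
          * (Fintype.card κ - ∑ u, 1 / (m u : ℝ)) := by
  have h𝒮 : (powersetCard n (univ : Finset ι)).Nonempty :=
    powersetCard_nonempty.mpr (by rwa [card_univ])
  rw [funext (avgWithinEdgeCount_eq_pairSum m v G),
    expect_sub_expect_pairSum_sq _ h𝒮 _ (fun T _ => card_filter_powersetCard_univ_superset n T)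
      (pairWeight_comm m v G) (pairWeight_self m v G),
    sum_sum_pairWeight G hv hm, sum_sq_sum_pairWeight G hv hm, sum_sum_pairWeight_sq G hv hm]
  simp only [one_div]
  ring

end ValueGraph

open scoped Classical

/-- **part of Lemma 4 of the paper.**  Variances of the averaging
within-sample edge-counts under the permutation null distribution. -/
theorem variance_R1a_R2a
    -- number of distinct values and multiplicities
    (K : ℕ) (m : Fin K → ℕ) (hm : ∀ u, 1 ≤ m u)
    -- total sample size
    (N : ℕ)
    -- value map with prescribed fiber sizes
    (v : Fin N → Fin K)
    (hv : ∀ u, (Finset.univ.filter (fun i => v i = u)).card = m u)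
    -- similarity graph on the distinct values
    (C₀ : SimpleGraph (Fin K))
    -- sizes of sample 1 and sample 2
    (n₁ n₂ : ℕ) (hn₁' : n₁ ≤ N - 1) (hn₂ : n₂ = N - n₁)
    -- expectation under the permutation null distribution (uniform over
    -- all `n₁`-element subsets of `Fin N`)
    (E : (Finset (Fin N) → ℝ) → ℝ)
    (hE : ∀ f, E f =
      (∑ S ∈ Finset.powersetCard n₁ (Finset.univ : Finset (Fin N)), f S) / (N.choose n₁ : ℝ))
    -- within-group counts
    (n1 : Fin K → Finset (Fin N) → ℝ)
    (hn1 : ∀ u S, n1 u S = ((S.filter (fun i => v i = u)).card : ℝ))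
    (n2 : Fin K → Finset (Fin N) → ℝ)
    (hn2 : ∀ u S, n2 u S = (m u : ℝ) - n1 u S)
    -- the averaging statistics
    (R1a : Finset (Fin N) → ℝ)
    (hR1a : ∀ S, R1a S = ∑ u, n1 u S * (n1 u S - 1) / (m u : ℝ)
        + ∑ e ∈ C₀.edgeFinset,
            Sym2.lift ⟨fun u w => n1 u S * n1 w S / ((m u : ℝ) * (m w : ℝ)),
              fun u w => by ring⟩ e)
    (R2a : Finset (Fin N) → ℝ)
    (hR2a : ∀ S, R2a S = ∑ u, n2 u S * (n2 u S - 1) / (m u : ℝ)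
        + ∑ e ∈ C₀.edgeFinset,
            Sym2.lift ⟨fun u w => n2 u S * n2 w S / ((m u : ℝ) * (m w : ℝ)),
              fun u w => by ring⟩ e)
    -- variance under the permutation null distribution
    (Var : (Finset (Fin N) → ℝ) → ℝ)
    (hVar : ∀ f, Var f = E (fun S => (f S - E f) ^ 2))
    -- the constants p₁, p₂, p₃, q₁, q₂, q₃
    (p₁ p₂ p₃ q₁ q₂ q₃ : ℝ)
    (hp₁ : p₁ = (n₁ : ℝ) * ((n₁ : ℝ) - 1) / ((N : ℝ) * ((N : ℝ) - 1)))
    (hp₂ : p₂ = (n₁ : ℝ) * ((n₁ : ℝ) - 1) * ((n₁ : ℝ) - 2) /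
      ((N : ℝ) * ((N : ℝ) - 1) * ((N : ℝ) - 2)))
    (hp₃ : p₃ = (n₁ : ℝ) * ((n₁ : ℝ) - 1) * ((n₁ : ℝ) - 2) * ((n₁ : ℝ) - 3) /
      ((N : ℝ) * ((N : ℝ) - 1) * ((N : ℝ) - 2) * ((N : ℝ) - 3)))
    (hq₁ : q₁ = (n₂ : ℝ) * ((n₂ : ℝ) - 1) / ((N : ℝ) * ((N : ℝ) - 1)))
    (hq₂ : q₂ = (n₂ : ℝ) * ((n₂ : ℝ) - 1) * ((n₂ : ℝ) - 2) /
      ((N : ℝ) * ((N : ℝ) - 1) * ((N : ℝ) - 2)))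
    (hq₃ : q₃ = (n₂ : ℝ) * ((n₂ : ℝ) - 1) * ((n₂ : ℝ) - 2) * ((n₂ : ℝ) - 3) /
      ((N : ℝ) * ((N : ℝ) - 1) * ((N : ℝ) - 2) * ((N : ℝ) - 3)))
    :
    Var R1a = 4 * (p₂ - p₃) * ((N : ℝ) - (K : ℝ) + 2 * (C₀.edgeFinset.card : ℝ)
        + (∑ u, (C₀.degree u : ℝ) ^ 2 / (4 * (m u : ℝ)))
        - (∑ u, (C₀.degree u : ℝ) / (m u : ℝ)))
      + (p₃ - p₁ ^ 2) * ((N : ℝ) - (K : ℝ) + (C₀.edgeFinset.card : ℝ)) ^ 2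
      + (p₁ - 2 * p₂ + p₃) * (∑ e ∈ C₀.edgeFinset,
          Sym2.lift ⟨fun u w => 1 / ((m u : ℝ) * (m w : ℝ)), fun u w => by ring⟩ e)
      + 2 * (p₁ - 4 * p₂ + 3 * p₃) * ((K : ℝ) - ∑ u, 1 / (m u : ℝ)) ∧
    Var R2a = 4 * (q₂ - q₃) * ((N : ℝ) - (K : ℝ) + 2 * (C₀.edgeFinset.card : ℝ)
        + (∑ u, (C₀.degree u : ℝ) ^ 2 / (4 * (m u : ℝ)))
        - (∑ u, (C₀.degree u : ℝ) / (m u : ℝ)))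
      + (q₃ - q₁ ^ 2) * ((N : ℝ) - (K : ℝ) + (C₀.edgeFinset.card : ℝ)) ^ 2
      + (q₁ - 2 * q₂ + q₃) * (∑ e ∈ C₀.edgeFinset,
          Sym2.lift ⟨fun u w => 1 / ((m u : ℝ) * (m w : ℝ)), fun u w => by ring⟩ e)
      + 2 * (q₁ - 4 * q₂ + 3 * q₃) * ((K : ℝ) - ∑ u, 1 / (m u : ℝ)) := by
  have hm₀ : ∀ u, m u ≠ 0 := fun u => Nat.one_le_iff_ne_zero.mp (hm u)
  have hE' : ∀ f, E f = 𝔼 S ∈ powersetCard n₁ univ, f S := fun f => by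
    rw [hE, expect_eq_sum_div_card, card_powersetCard, card_univ, Fintype.card_fin]
  have hcompl : ∀ f : Finset (Fin N) → ℝ,
      E (fun S => f Sᶜ) = 𝔼 S ∈ powersetCard n₂ univ, f S := fun f => by
    rw [hE', expect_powersetCard_compl (by rw [Fintype.card_fin]; omega), Fintype.card_fin, hn₂]
  have hvar := fun n (hn : n ≤ N) =>
    expect_sub_expect_avgWithinEdgeCount_sq C₀ hv hm₀ (n := n) (by rwa [Fintype.card_fin])
  simp only [Fintype.card_fin, inclusionProb_two, inclusionProb_three, inclusionProb_four]
    at hvar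
  have hR1 : R1a = avgWithinEdgeCount m v C₀ := funext fun S => by
    rw [hR1a, avgWithinEdgeCount]
    simp only [hn1]
  have hR2 : R2a = fun S => avgWithinEdgeCount m v C₀ Sᶜ := funext fun S => by
    rw [hR2a, avgWithinEdgeCount]
    simp only [hn2, hn1, card_filter_compl, hv]
  constructor
  · rw [hVar, hE', hE', hR1, hvar n₁ (by omega), hp₁, hp₂, hp₃]
  · have hmean : E R2a = 𝔼 S ∈ powersetCard n₂ univ, avgWithinEdgeCount m v C₀ S := by
      rw [hR2]
      exact hcompl _
    rw [hVar, hmean, hR2, hcompl fun S => (avgWithinEdgeCount m v C₀ S - _) ^ 2,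
      hvar n₂ (by omega), hq₁, hq₂, hq₃]
end
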